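/- arXiv:1802.08876 — 3 statements merged into one kernel-verified Lean document; each statement's English description precedes it below -/
import Mathlib

section
/- Let A ∈ ℝ^{n×n} and B ∈ ℝ^{m×m} be real symmetric matrices such that for every λ ∈ ℝ, the Euclidean norm of the orthogonal projection of the all-ones vector 𝟙_n onto ker(A − λI_n) equals the Euclidean norm of the orthogonal projection of 𝟙_m onto ker(B − λI_m). Then there exists a real matrix X ∈ ℝ^{n×m} with AX = XB, X·𝟙_m = 𝟙_n, and X^T·𝟙_n = 𝟙_m. -/
/-!
Let `p_μ` and `q_μ` be the orthogonal projections of `𝟙` onto the `μ`-eigenspaces of `A` and `B`.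
A projection is self-adjoint and idempotent, so `⟪p_μ, 𝟙⟫ = ‖p_μ‖² = ‖q_μ‖² = ⟪q_μ, 𝟙⟫ =: w_μ`.
Take `X = ∑_μ w_μ⁻¹ p_μ q_μᵀ`. Then `A X = ∑_μ μ w_μ⁻¹ p_μ q_μᵀ = X B`, and `X 𝟙 = ∑_μ p_μ = 𝟙` by
the spectral decomposition of `𝟙` (when `w_μ = 0` the vector `p_μ` itself vanishes); likewise
`Xᵀ 𝟙 = ∑_μ q_μ = 𝟙`.
-/

open Matrix Module End

namespace LinearMap.IsSymmetric

variable {𝕜 E : Type*} [RCLike 𝕜] [NormedAddCommGroup E] [InnerProductSpace 𝕜 E]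
  [FiniteDimensional 𝕜 E] {T : E →ₗ[𝕜] E}

theorem sum_starProjection_eigenspace (hT : T.IsSymmetric) {S : Finset 𝕜}
    (hS : ∀ μ, HasEigenvalue T μ → μ ∈ S) (v : E) :
    ∑ μ ∈ S, (eigenspace T μ).starProjection v = v := by
  have hV := hT.orthogonalFamily_eigenspaces.comp (Subtype.coe_injective (p := (· ∈ S)))
  have hle : ⨆ μ, eigenspace T μ ≤ ⨆ μ : S, eigenspace T μ := by
    refine iSup_le fun μ => ?_
    by_cases hμ : μ ∈ S
    · exact le_iSup (fun ν : S => eigenspace T ν) ⟨μ, hμ⟩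
    · simp [not_not.mp (mt (fun h => hS μ (hasEigenvalue_iff.mpr h)) hμ)]
  have hv : v ∈ ⨆ μ : S, eigenspace T μ :=
    hle (Submodule.orthogonal_eq_bot_iff.mp hT.orthogonalComplement_iSup_eigenspaces_eq_bot ▸
      Submodule.mem_top)
  rw [← Finset.sum_coe_sort S]
  exact hV.sum_projection_of_mem_iSup v hv

end LinearMap.IsSymmetric

theorem inv_smul_smul_of_eq_zero_imp {K V : Type*} [DivisionRing K] [AddCommGroup V] [Module K V]
    {a : K} {v : V} (h : a = 0 → v = 0) : a⁻¹ • a • v = v := by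
  rcases eq_or_ne a 0 with rfl | ha
  · simp [h rfl]
  · exact inv_smul_smul₀ ha v

namespace Matrix

section Intertwining

variable {ι κ K : Type*} [Field K]

theorem sum_inv_smul_vecMulVec_mulVec_one [Fintype κ] {S : Finset K} {p : K → ι → K}
    {q : K → κ → K} {c : K → K} (hc : ∀ μ, c μ = q μ ⬝ᵥ 1) (h0 : ∀ μ, c μ = 0 → p μ = 0) :
    (∑ μ ∈ S, (c μ)⁻¹ • vecMulVec (p μ) (q μ)) *ᵥ 1 = ∑ μ ∈ S, p μ := by
  simp only [sum_mulVec, smul_mulVec, vecMulVec_mulVec, op_smul_eq_smul, ← hc]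
  exact Finset.sum_congr rfl fun μ _ => inv_smul_smul_of_eq_zero_imp (h0 μ)

theorem exists_intertwining_of_sum_eigenvectors [Fintype ι] [Fintype κ] {A : Matrix ι ι K}
    {B : Matrix κ κ K} {S : Finset K} {p : K → ι → K} {q : K → κ → K}
    (hAp : ∀ μ, A *ᵥ p μ = μ • p μ) (hqB : ∀ μ, q μ ᵥ* B = μ • q μ)
    (hp : ∑ μ ∈ S, p μ = 1) (hq : ∑ μ ∈ S, q μ = 1) (hpq : ∀ μ, p μ ⬝ᵥ 1 = q μ ⬝ᵥ 1)
    (hp0 : ∀ μ, p μ ⬝ᵥ 1 = 0 → p μ = 0) (hq0 : ∀ μ, q μ ⬝ᵥ 1 = 0 → q μ = 0) :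
    ∃ X : Matrix ι κ K, A * X = X * B ∧ X *ᵥ 1 = 1 ∧ Xᵀ *ᵥ 1 = 1 := by
  refine ⟨∑ μ ∈ S, (p μ ⬝ᵥ 1)⁻¹ • vecMulVec (p μ) (q μ), ?_, ?_, ?_⟩
  · simp only [Matrix.mul_sum, Matrix.sum_mul, Matrix.mul_smul, Matrix.smul_mul, mul_vecMulVec,
      vecMulVec_mul, hAp, hqB, smul_vecMulVec, vecMulVec_smul]
  · rw [sum_inv_smul_vecMulVec_mulVec_one hpq hp0, hp]
  · simp only [transpose_sum, transpose_smul, transpose_vecMulVec]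
    rw [sum_inv_smul_vecMulVec_mulVec_one (fun _ => rfl) (fun μ h => hq0 μ (hpq μ ▸ h)), hq]

end Intertwining

section Eigenprojection

variable {𝕜 ι : Type*} [RCLike 𝕜] [Fintype ι] [DecidableEq ι]

noncomputable def eigenproj (A : Matrix ι ι 𝕜) (μ : 𝕜) (v : ι → 𝕜) : ι → 𝕜 :=
  WithLp.ofLp ((eigenspace (toEuclideanLin A) μ).starProjection (WithLp.toLp 2 v))

theorem ker_toEuclideanLin_sub_smul_one (A : Matrix ι ι 𝕜) (μ : 𝕜) :
    LinearMap.ker (toEuclideanLin (A - μ • 1)) = eigenspace (toEuclideanLin A) μ := by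
  rw [eigenspace_def, map_sub, map_smul, toLpLin_one, one_eq_id]

theorem mulVec_eigenproj (A : Matrix ι ι 𝕜) (μ : 𝕜) (v : ι → 𝕜) :
    A *ᵥ eigenproj A μ v = μ • eigenproj A μ v :=
  congrArg WithLp.ofLp (mem_eigenspace_iff.mp
    ((eigenspace (toEuclideanLin A) μ).orthogonalProjectionOnto (WithLp.toLp 2 v)).2)

theorem sum_eigenproj {A : Matrix ι ι 𝕜} (hA : A.IsHermitian) {S : Finset 𝕜}
    (hS : ∀ μ, HasEigenvalue (toEuclideanLin A) μ → μ ∈ S) (v : ι → 𝕜) :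
    ∑ μ ∈ S, eigenproj A μ v = v := by
  simp only [eigenproj, ← WithLp.ofLp_sum,
    (isSymmetric_toEuclideanLin_iff.mpr hA).sum_starProjection_eigenspace hS]

theorem eigenproj_dotProduct_self (A : Matrix ι ι ℝ) (μ : ℝ) (v : ι → ℝ) :
    eigenproj A μ v ⬝ᵥ v =
      ‖(eigenspace (toEuclideanLin A) μ).orthogonalProjectionOnto (WithLp.toLp 2 v)‖ ^ 2 := by
  rw [← (eigenspace (toEuclideanLin A) μ).re_inner_starProjection_eq_normSq, RCLike.re_to_real,
    real_inner_comm, EuclideanSpace.inner_eq_star_dotProduct, star_trivial]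
  rfl

theorem eigenproj_eq_zero_of_dotProduct_self_eq_zero {A : Matrix ι ι ℝ} {μ : ℝ} {v : ι → ℝ}
    (h : eigenproj A μ v ⬝ᵥ v = 0) : eigenproj A μ v = 0 := by
  rw [eigenproj_dotProduct_self, sq_eq_zero_iff, norm_eq_zero] at h
  simp [eigenproj, Submodule.starProjection_apply, h]

end Eigenprojection

end Matrix

theorem stmt6 (n m : ℕ) (A : Matrix (Fin n) (Fin n) ℝ) (B : Matrix (Fin m) (Fin m) ℝ)
    (hA : A.IsSymm) (hB : B.IsSymm)
    (h : ∀ μ : ℝ,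
      ‖Submodule.orthogonalProjectionOnto (LinearMap.ker (Matrix.toEuclideanLin (A - μ • 1)))
          (WithLp.toLp 2 (fun _ => 1 : Fin n → ℝ) : EuclideanSpace ℝ (Fin n))‖ =
      ‖Submodule.orthogonalProjectionOnto (LinearMap.ker (Matrix.toEuclideanLin (B - μ • 1)))
          (WithLp.toLp 2 (fun _ => 1 : Fin m → ℝ) : EuclideanSpace ℝ (Fin m))‖) :
    ∃ X : Matrix (Fin n) (Fin m) ℝ,
      A * X = X * B ∧
      X *ᵥ (fun _ => 1) = (fun _ => 1) ∧
      Xᵀ *ᵥ (fun _ => 1) = (fun _ => 1) := by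
  have hweight : ∀ μ, eigenproj A μ 1 ⬝ᵥ 1 = eigenproj B μ 1 ⬝ᵥ 1 := fun μ => by
    have hμ := h μ
    rw [ker_toEuclideanLin_sub_smul_one, ker_toEuclideanLin_sub_smul_one] at hμ
    rw [eigenproj_dotProduct_self, eigenproj_dotProduct_self]
    exact congrArg (· ^ 2) hμ
  let S := (finite_hasEigenvalue (toEuclideanLin A)).toFinset ∪
    (finite_hasEigenvalue (toEuclideanLin B)).toFinset
  exact exists_intertwining_of_sum_eigenvectors (S := S)
    (fun μ => mulVec_eigenproj A μ 1)
    (fun μ => by rw [← mulVec_transpose, hB.eq, mulVec_eigenproj])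
    (sum_eigenproj (isHermitian_iff_isSymm.mpr hA)
      (fun μ hμ => Finset.mem_union_left _ (by simpa using hμ)) 1)
    (sum_eigenproj (isHermitian_iff_isSymm.mpr hB)
      (fun μ hμ => Finset.mem_union_right _ (by simpa using hμ)) 1)
    hweight
    (fun _ => eigenproj_eq_zero_of_dotProduct_self_eq_zero)
    (fun _ => eigenproj_eq_zero_of_dotProduct_self_eq_zero)
end

section
/- Let G and H be finite simple graphs. Color refinement distinguishes G and H if and only if there exists a d ∈ ℕ such that the multiset of rooted-isomorphism classes {{[T(G,v)_{≤d}] : v ∈ V(G)}} differs from the multiset {{[T(H,w)_{≤d}] : w ∈ V(H)}}. -/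
/-- The type of colors after `i` rounds of color refinement. -/
def CRColor : ℕ → Type
  | 0 => Unit
  | (i + 1) => Multiset (CRColor i)

/-- The coloring computed by color refinement after `i` rounds. -/
def crColoring {V : Type*} [Fintype V] (G : SimpleGraph V) [DecidableRel G.Adj] :
    (i : ℕ) → V → CRColor i
  | 0, _ => ()
  | (i + 1), v => (G.neighborFinset v).val.map (crColoring G i)

/-- Color refinement distinguishes `G` and `H` if after some number of rounds the
multisets of colors of the two graphs differ. -/
def crDistinguishes {V W : Type*} [Fintype V] [Fintype W]
    (G : SimpleGraph V) (H : SimpleGraph W)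
    [DecidableRel G.Adj] [DecidableRel H.Adj] : Prop :=
  ∃ i : ℕ,
    (Finset.univ.val.map (crColoring G i)) ≠ (Finset.univ.val.map (crColoring H i))

/-- The nodes of the depth-`d` tree unfolding of `G` at `v`: walks in `G` starting
at `v` of length at most `d`, encoded as the lists of visited vertices. -/
def UNode {V : Type*} (G : SimpleGraph V) (v : V) (d : ℕ) : Type _ :=
  {l : List V // l.head? = some v ∧ l.Chain' G.Adj ∧ l.length ≤ d + 1}

/-- The depth-`d` tree unfolding of `G` at `v`. -/
def unfoldTree {V : Type*} (G : SimpleGraph V) (v : V) (d : ℕ) :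
    SimpleGraph (UNode G v d) :=
  SimpleGraph.fromRel fun l l' => ∃ x : V, l'.1 = l.1 ++ [x]

/-- The root of the tree unfolding: the length-0 walk `(v)`. -/
def unfoldRoot {V : Type*} (G : SimpleGraph V) (v : V) (d : ℕ) : UNode G v d :=
  ⟨[v], by refine ⟨rfl, ?_, ?_⟩ <;> simp [List.Chain']⟩

/-!
Both sides obey the same recursion. Round `d + 1` colours `v` by the multiset of the round-`d`
colours of its neighbours, and the depth-`(d + 1)` unfolding at `v` is a root joined to the roots
of the depth-`d` unfoldings at the neighbours of `v`. Rooted isomorphisms of these branches, matched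
along a bijection of the neighbourhoods, glue to a rooted isomorphism of the unfoldings. Conversely,
a rooted isomorphism permutes the children of the root and, since every branch is connected and
avoids the root, maps each branch onto the branch below the image child. So by induction on `d`,
`C_d(v) = C_d(w)` iff the depth-`d` unfoldings at `v` and `w` are rooted-isomorphic, and two
multisets of values indexed by finite types agree iff a bijection matches the values pointwise.
-/

open Finset

theorem Finset.univ_val_map_eq_iff_exists_equiv {A B C : Type*} [Fintype A] [Fintype B]
    (f : A → C) (g : B → C) :
    univ.val.map f = univ.val.map g ↔ ∃ σ : A ≃ B, ∀ a, f a = g (σ a) := by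
  classical
  constructor
  · intro h
    have hfiber (c : C) : Fintype.card {a // f a = c} = Fintype.card {b // g b = c} := by
      have := congrArg (Multiset.count c) h
      rw [Multiset.count_map, Multiset.count_map] at this
      rw [Fintype.card_subtype, Fintype.card_subtype]
      simpa [Finset.filter, Finset.card, eq_comm] using this
    let e (c : C) : {a // f a = c} ≃ {b // g b = c} := Fintype.equivOfCardEq (hfiber c)
    exact ⟨Equiv.ofFiberEquiv e, fun a => (Equiv.ofFiberEquiv_map e a).symm⟩
  · rintro ⟨σ, hσ⟩
    rw [← Multiset.map_univ_val_equiv σ, Multiset.map_map]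
    exact Multiset.map_congr rfl fun a _ => hσ a

section ColorRefinement

variable {V W : Type*} [Fintype V] [Fintype W] {G : SimpleGraph V} {H : SimpleGraph W}
  [DecidableRel G.Adj] [DecidableRel H.Adj]

theorem crColoring_succ (d : ℕ) (v : V) :
    crColoring G (d + 1) v = univ.val.map fun u : G.neighborSet v => crColoring G d u := by
  rw [crColoring, SimpleGraph.neighborFinset, Set.toFinset, Finset.map_val, Multiset.map_map]
  rfl

theorem crColoring_succ_eq_iff {d : ℕ} {v : V} {w : W} :
    crColoring G (d + 1) v = crColoring H (d + 1) w ↔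
      ∃ σ : G.neighborSet v ≃ H.neighborSet w, ∀ u : G.neighborSet v,
        crColoring G d u = crColoring H d (σ u) := by
  rw [crColoring_succ, crColoring_succ]
  exact univ_val_map_eq_iff_exists_equiv _ _

end ColorRefinement

namespace UNode

variable {V : Type*} {G : SimpleGraph V} {v : V} {d : ℕ}

theorem val_eq_cons_tail (n : UNode G v d) : n.1 = v :: n.1.tail := by
  obtain ⟨_ | ⟨a, t⟩, h, -, -⟩ := n
  · simp at h
  · simp only [List.head?_cons, Option.some.injEq] at h
    subst h
    rfl

theorem val_ne_nil (n : UNode G v d) : n.1 ≠ [] := by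
  rw [val_eq_cons_tail n]
  exact List.cons_ne_nil _ _

theorem eq_root_iff {n : UNode G v d} : n = unfoldRoot G v d ↔ n.1.tail = [] := by
  refine ⟨by rintro rfl; rfl, fun h => Subtype.ext ?_⟩
  rw [val_eq_cons_tail n, h]
  rfl

theorem one_lt_length_of_ne_root {n : UNode G v d} (h : n ≠ unfoldRoot G v d) :
    1 < n.1.length := by
  rw [Ne, eq_root_iff, ← List.length_eq_zero_iff] at h
  rw [val_eq_cons_tail n, List.length_cons]
  omega

instance : Unique (UNode G v 0) where
  default := unfoldRoot G v 0
  uniq n := eq_root_iff.mpr <| by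
    have := n.2.2.2
    rw [val_eq_cons_tail n, List.length_cons] at this
    exact List.length_eq_zero_iff.mp (by omega)

theorem adj_iff {a b : UNode G v d} :
    (unfoldTree G v d).Adj a b ↔ (∃ x, b.1 = a.1 ++ [x]) ∨ ∃ x, a.1 = b.1 ++ [x] := by
  rw [unfoldTree, SimpleGraph.fromRel_adj, and_iff_right_iff_imp]
  rintro (⟨x, hx⟩ | ⟨x, hx⟩) rfl <;> simpa using congrArg List.length hx

def cons (u : G.neighborSet v) (l : UNode G u d) : UNode G v (d + 1) :=
  ⟨v :: l.1, rfl, List.isChain_cons.mpr ⟨fun y hy => by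
      rw [l.2.1, Option.mem_some_iff] at hy
      exact hy ▸ u.2, l.2.2.1⟩,
    by simpa using l.2.2.2⟩

@[simp]
theorem cons_val (u : G.neighborSet v) (l : UNode G u d) : (cons u l).1 = v :: l.1 := rfl

theorem cons_injective (u : G.neighborSet v) : Function.Injective (cons (d := d) u) :=
  fun _ _ h => Subtype.ext (List.cons_injective (congrArg Subtype.val h))

theorem cons_ne_root (u : G.neighborSet v) (l : UNode G u d) :
    cons u l ≠ unfoldRoot G v (d + 1) := by
  rw [Ne, eq_root_iff, cons_val, List.tail_cons]
  exact val_ne_nil l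

theorem getElem?_one_cons (u : G.neighborSet v) (l : UNode G u d) :
    (cons u l).1[1]? = some u.1 := by
  rw [cons_val, val_eq_cons_tail l]
  rfl

theorem eq_of_cons_eq_cons {u u' : G.neighborSet v} {l : UNode G u d} {l' : UNode G u' d}
    (h : cons u l = cons u' l') : u = u' :=
  Subtype.ext <| Option.some_injective _ <| by
    rw [← getElem?_one_cons u l, ← getElem?_one_cons u' l', h]

theorem eq_root_or_exists_cons (n : UNode G v (d + 1)) :
    n = unfoldRoot G v (d + 1) ∨ ∃ (u : G.neighborSet v) (l : UNode G u d), n = cons u l := by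
  obtain ⟨_ | ⟨a, _ | ⟨u, t⟩⟩, hhead, hchain, hlen⟩ := n
  · simp at hhead
  · simp only [List.head?_cons, Option.some.injEq] at hhead
    subst hhead
    exact Or.inl (eq_root_iff.mpr rfl)
  · simp only [List.head?_cons, Option.some.injEq] at hhead
    subst hhead
    obtain ⟨hu, ht⟩ := List.isChain_cons_cons.mp hchain
    exact Or.inr ⟨⟨u, hu⟩, ⟨u :: t, rfl, ht, by simpa using hlen⟩, rfl⟩

theorem root_adj_cons_iff (u : G.neighborSet v) {l : UNode G u d} :
    (unfoldTree G v (d + 1)).Adj (unfoldRoot G v (d + 1)) (cons u l) ↔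
      l = unfoldRoot G u d := by
  rw [adj_iff, eq_root_iff, cons_val, val_eq_cons_tail l]
  simp [unfoldRoot]

theorem cons_adj_cons_iff (u : G.neighborSet v) {l l' : UNode G u d} :
    (unfoldTree G v (d + 1)).Adj (cons u l) (cons u l') ↔ (unfoldTree G u d).Adj l l' := by
  rw [adj_iff, adj_iff]
  simp

/-- `n.1[1]?` records the branch of `n`; away from the root, adjacency preserves it. -/
theorem getElem?_one_eq_of_adj {a b : UNode G v d} (hab : (unfoldTree G v d).Adj a b)
    (ha : a ≠ unfoldRoot G v d) (hb : b ≠ unfoldRoot G v d) : a.1[1]? = b.1[1]? := by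
  rcases adj_iff.mp hab with ⟨x, hx⟩ | ⟨x, hx⟩
  · rw [hx, List.getElem?_append_left (one_lt_length_of_ne_root ha)]
  · rw [hx, List.getElem?_append_left (one_lt_length_of_ne_root hb)]

theorem cons_not_adj_cons {u u' : G.neighborSet v} (hne : u ≠ u') (l : UNode G u d)
    (l' : UNode G u' d) : ¬ (unfoldTree G v (d + 1)).Adj (cons u l) (cons u' l') := fun h =>
  hne <| Subtype.ext <| Option.some_injective _ <| by
    rw [← getElem?_one_cons u l, ← getElem?_one_cons u' l']
    exact getElem?_one_eq_of_adj h (cons_ne_root u l) (cons_ne_root u' l')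

theorem mem_range_cons_iff (u : G.neighborSet v) {n : UNode G v (d + 1)} :
    n ∈ Set.range (cons u) ↔ n.1[1]? = some u.1 := by
  refine ⟨by rintro ⟨l, rfl⟩; exact getElem?_one_cons u l, fun h => ?_⟩
  rcases eq_root_or_exists_cons n with rfl | ⟨u', l, rfl⟩
  · simp [unfoldRoot] at h
  · obtain rfl : u' = u :=
      Subtype.ext (Option.some_injective _ ((getElem?_one_cons u' l).symm.trans h))
    exact ⟨l, rfl⟩

def consEmbedding (u : G.neighborSet v) : unfoldTree G u d ↪g unfoldTree G v (d + 1) where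
  toFun := cons u
  inj' := cons_injective u
  map_rel_iff' := cons_adj_cons_iff u

variable (G v d) in
noncomputable def neighborSetRootEquiv :
    G.neighborSet v ≃ (unfoldTree G v (d + 1)).neighborSet (unfoldRoot G v (d + 1)) := by
  refine Equiv.ofBijective
    (fun u => ⟨cons u (unfoldRoot G u d), (root_adj_cons_iff u).mpr rfl⟩) ⟨?_, ?_⟩
  · exact fun u u' h => eq_of_cons_eq_cons (congrArg Subtype.val h)
  · rintro ⟨n, hn⟩
    rcases eq_root_or_exists_cons n with rfl | ⟨u, l, rfl⟩
    · exact ((unfoldTree G v (d + 1)).irrefl hn).elim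
    · obtain rfl := (root_adj_cons_iff u).mp hn
      exact ⟨u, rfl⟩

variable (G v d) in
/-- `none` is the root and `some ⟨u, l⟩` is `cons u l`. -/
noncomputable def optionSigmaEquiv :
    Option (Σ u : G.neighborSet v, UNode G u d) ≃ UNode G v (d + 1) := by
  refine Equiv.ofBijective (Option.elim · (unfoldRoot G v (d + 1)) fun p => cons p.1 p.2)
    ⟨?_, ?_⟩
  · rintro (_ | ⟨u, l⟩) (_ | ⟨u', l'⟩) h <;> simp only [Option.elim] at h
    · rfl
    · exact absurd h.symm (cons_ne_root _ _)
    · exact absurd h (cons_ne_root _ _)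
    · obtain rfl := eq_of_cons_eq_cons h
      obtain rfl := cons_injective u h
      rfl
  · intro n
    rcases eq_root_or_exists_cons n with rfl | ⟨u, l, rfl⟩
    · exact ⟨none, rfl⟩
    · exact ⟨some ⟨u, l⟩, rfl⟩

end UNode

open UNode

theorem unfoldTree_reachable_root {V : Type*} {G : SimpleGraph V} {v : V} {d : ℕ}
    (n : UNode G v d) : (unfoldTree G v d).Reachable (unfoldRoot G v d) n := by
  induction d generalizing v with
  | zero => exact Subsingleton.elim (unfoldRoot G v 0) n ▸ .refl _
  | succ d ih =>
    rcases eq_root_or_exists_cons n with rfl | ⟨u, l, rfl⟩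
    · exact .refl _
    · exact ((root_adj_cons_iff u).mpr rfl).reachable.trans ((ih l).map (consEmbedding u).toHom)

section RootedIso

variable {V W : Type*} {G : SimpleGraph V} {H : SimpleGraph W} {v : V} {w : W} {d : ℕ}

theorem exists_rootedIso_zero :
    ∃ e : unfoldTree G v 0 ≃g unfoldTree H w 0, e (unfoldRoot G v 0) = unfoldRoot H w 0 :=
  ⟨⟨Equiv.ofUnique _ _, fun {a b} => by
      simp only [Subsingleton.elim a b, SimpleGraph.irrefl]⟩,
    Subsingleton.elim _ _⟩

section Branch

variable (e : unfoldTree G v (d + 1) ≃g unfoldTree H w (d + 1))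
  (hroot : e (unfoldRoot G v (d + 1)) = unfoldRoot H w (d + 1))

/-- Each branch is connected and avoids the root, so a rooted isomorphism keeps it inside a
single branch. -/
theorem getElem?_one_apply_cons (hroot : e (unfoldRoot G v (d + 1)) = unfoldRoot H w (d + 1))
    (u : G.neighborSet v) (l : UNode G u d) :
    (e (cons u l)).1[1]? = (e (cons u (unfoldRoot G u d))).1[1]? := by
  have hne (l' : UNode G u d) : e (cons u l') ≠ unfoldRoot H w (d + 1) := fun h =>
    cons_ne_root u l' (e.injective (h.trans hroot.symm))
  induction (SimpleGraph.reachable_iff_reflTransGen _ _).mp (unfoldTree_reachable_root l) with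
  | refl => rfl
  | tail _ hadj ih =>
    rw [← ih]
    exact (getElem?_one_eq_of_adj (e.map_adj_iff.mpr ((cons_adj_cons_iff u).mpr hadj))
      (hne _) (hne _)).symm

theorem mapsTo_range_cons (hroot : e (unfoldRoot G v (d + 1)) = unfoldRoot H w (d + 1))
    (u : G.neighborSet v) (u' : H.neighborSet w)
    (h : e (cons u (unfoldRoot G u d)) = cons u' (unfoldRoot H u' d)) :
    Set.MapsTo e (Set.range (cons u)) (Set.range (cons u')) := by
  rintro _ ⟨l, rfl⟩
  rw [mem_range_cons_iff, getElem?_one_apply_cons e hroot, h, getElem?_one_cons]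

noncomputable def branchIso (u : G.neighborSet v) (u' : H.neighborSet w)
    (h : e (cons u (unfoldRoot G u d)) = cons u' (unfoldRoot H u' d)) :
    unfoldTree G u d ≃g unfoldTree H u' d :=
  have hbij : Set.BijOn e (Set.range (cons u)) (Set.range (cons u')) :=
    e.toEquiv.bijOn' (mapsTo_range_cons e hroot u u' h)
      (mapsTo_range_cons e.symm (e.symm_apply_eq.mpr hroot.symm) u' u
        (e.symm_apply_eq.mpr h.symm))
  (consEmbedding u).isoInduceRange.trans <|
    (e.induce hbij).trans (consEmbedding u').isoInduceRange.symm

theorem branchIso_root (u : G.neighborSet v) (u' : H.neighborSet w)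
    (h : e (cons u (unfoldRoot G u d)) = cons u' (unfoldRoot H u' d)) :
    branchIso e hroot u u' h (unfoldRoot G u d) = unfoldRoot H u' d :=
  ((consEmbedding u').isoInduceRange.symm_apply_eq).mpr (Subtype.ext h)

noncomputable def childEquiv : G.neighborSet v ≃ H.neighborSet w :=
  (neighborSetRootEquiv G v d).trans <| (e.mapNeighborSet _).trans <|
    (Equiv.setCongr (congrArg _ hroot)).trans (neighborSetRootEquiv H w d).symm

theorem apply_cons_root (u : G.neighborSet v) :
    e (cons u (unfoldRoot G u d)) = cons (childEquiv e hroot u) (unfoldRoot H _ d) :=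
  congrArg Subtype.val ((neighborSetRootEquiv H w d).apply_symm_apply
    (Equiv.setCongr (congrArg _ hroot) (e.mapNeighborSet _ (neighborSetRootEquiv G v d u)))).symm

end Branch

section Glue

variable (σ : G.neighborSet v ≃ H.neighborSet w)
  (e : ∀ u : G.neighborSet v, unfoldTree G u d ≃g unfoldTree H (σ u) d)

noncomputable def glueEquiv : UNode G v (d + 1) ≃ UNode H w (d + 1) :=
  (optionSigmaEquiv G v d).symm.trans <|
    (Equiv.sigmaCongr σ fun u => (e u).toEquiv).optionCongr.trans (optionSigmaEquiv H w d)

theorem glueEquiv_root : glueEquiv σ e (unfoldRoot G v (d + 1)) = unfoldRoot H w (d + 1) :=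
  congrArg (optionSigmaEquiv H w d ∘ Option.map _)
    ((optionSigmaEquiv G v d).symm_apply_apply none)

theorem glueEquiv_cons (u : G.neighborSet v) (l : UNode G u d) :
    glueEquiv σ e (cons u l) = cons (σ u) (e u l) :=
  congrArg (optionSigmaEquiv H w d ∘ Option.map _)
    ((optionSigmaEquiv G v d).symm_apply_apply (some ⟨u, l⟩))

variable {σ e} in
theorem glueEquiv_adj_iff (he : ∀ u, e u (unfoldRoot G u d) = unfoldRoot H (σ u) d)
    {a b : UNode G v (d + 1)} :
    (unfoldTree H w (d + 1)).Adj (glueEquiv σ e a) (glueEquiv σ e b) ↔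
      (unfoldTree G v (d + 1)).Adj a b := by
  have root_cons (u : G.neighborSet v) (l : UNode G u d) :
      (unfoldTree H w (d + 1)).Adj (glueEquiv σ e (unfoldRoot G v (d + 1)))
          (glueEquiv σ e (cons u l)) ↔
        (unfoldTree G v (d + 1)).Adj (unfoldRoot G v (d + 1)) (cons u l) := by
    rw [glueEquiv_root, glueEquiv_cons, root_adj_cons_iff, root_adj_cons_iff, ← he,
      (e u).injective.eq_iff]
  rcases eq_root_or_exists_cons a with rfl | ⟨u, l, rfl⟩ <;>
    rcases eq_root_or_exists_cons b with rfl | ⟨u', l', rfl⟩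
  · simp only [SimpleGraph.irrefl]
  · exact root_cons u' l'
  · rw [SimpleGraph.adj_comm, SimpleGraph.adj_comm (unfoldTree G v _)]
    exact root_cons u l
  · rw [glueEquiv_cons, glueEquiv_cons]
    by_cases huu' : u = u'
    · subst huu'
      rw [cons_adj_cons_iff, cons_adj_cons_iff]
      exact (e u).map_adj_iff
    · exact iff_of_false (cons_not_adj_cons (σ.injective.ne huu') _ _)
        (cons_not_adj_cons huu' _ _)

noncomputable def glueIso (he : ∀ u, e u (unfoldRoot G u d) = unfoldRoot H (σ u) d) :
    unfoldTree G v (d + 1) ≃g unfoldTree H w (d + 1) where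
  toEquiv := glueEquiv σ e
  map_rel_iff' := glueEquiv_adj_iff he

end Glue

theorem exists_rootedIso_succ_iff :
    (∃ e : unfoldTree G v (d + 1) ≃g unfoldTree H w (d + 1),
        e (unfoldRoot G v (d + 1)) = unfoldRoot H w (d + 1)) ↔
      ∃ σ : G.neighborSet v ≃ H.neighborSet w, ∀ u : G.neighborSet v,
        ∃ e : unfoldTree G u d ≃g unfoldTree H (σ u) d,
          e (unfoldRoot G u d) = unfoldRoot H (σ u) d := by
  constructor
  · rintro ⟨e, hroot⟩
    exact ⟨childEquiv e hroot, fun u =>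
      ⟨_, branchIso_root e hroot u _ (apply_cons_root e hroot u)⟩⟩
  · rintro ⟨σ, he⟩
    choose e he using he
    exact ⟨glueIso σ e he, glueEquiv_root σ e⟩

end RootedIso

theorem crColoring_eq_iff_exists_rootedIso {V W : Type*} [Fintype V] [Fintype W]
    {G : SimpleGraph V} {H : SimpleGraph W} [DecidableRel G.Adj] [DecidableRel H.Adj]
    (d : ℕ) (v : V) (w : W) :
    crColoring G d v = crColoring H d w ↔
      ∃ e : unfoldTree G v d ≃g unfoldTree H w d, e (unfoldRoot G v d) = unfoldRoot H w d := by
  induction d generalizing v w with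
  | zero => exact iff_of_true rfl (exists_rootedIso_zero)
  | succ d ih =>
    rw [crColoring_succ_eq_iff, exists_rootedIso_succ_iff]
    exact exists_congr fun σ => forall_congr' fun u => ih u (σ u)

/-- Color refinement distinguishes `G` and `H` iff for some depth `d` the multisets
of rooted-isomorphism classes of the depth-`d` tree unfoldings differ, i.e. there is
no bijection between the vertex sets matching each vertex to a vertex with a
rooted-isomorphic unfolding. -/
theorem stmt16 {V W : Type*} [Fintype V] [Fintype W]
    (G : SimpleGraph V) (H : SimpleGraph W)
    [DecidableRel G.Adj] [DecidableRel H.Adj] :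
    crDistinguishes G H ↔
    ∃ d : ℕ, ¬ ∃ σ : V ≃ W, ∀ v : V,
      ∃ e : unfoldTree G v d ≃g unfoldTree H (σ v) d,
        e (unfoldRoot G v d) = unfoldRoot H (σ v) d := by
  refine exists_congr fun d => not_congr ?_
  rw [univ_val_map_eq_iff_exists_equiv]
  exact exists_congr fun σ =>
    forall_congr' fun v => crColoring_eq_iff_exists_rootedIso d v (σ v)
end

section
/- Let k ≥ 1 be an integer, let G and H be finite simple graphs with vertex sets V and W, and let (X_π) be a real solution of L^{k+1}_iso(G,H). Let F be a finite simple graph with a path decomposition P = (X_1, Y_1, X_2, …, Y_{ℓ−1}, X_ℓ) in which |X_i| = k for all i, |Y_i| = k+1 for all i, and X_i ⊆ Y_i ⊇ X_{i+1} for all i, and write X_1 = {u_1, …, u_k}. Then for every tuple (v_1,…,v_k) ∈ V^k: biso((F,P),G | u_1…u_k ↦ v_1…v_k) = Σ_{(w_1,…,w_k)∈W^k} X_{{(v_1,w_1),…,(v_k,w_k)}} · biso((F,P),H | u_1…u_k ↦ w_1…w_k). -/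
/-- `π ⊆ V × W` is a partial isomorphism from `G` to `H`. -/
def IsPartialIso {V W : Type*} (G : SimpleGraph V) (H : SimpleGraph W)
    (π : Finset (V × W)) : Prop :=
  ∀ p ∈ π, ∀ q ∈ π, (p.1 = q.1 ↔ p.2 = q.2) ∧ (G.Adj p.1 q.1 ↔ H.Adj p.2 q.2)

/-- `X` is a solution of the system `L^K_iso(G,H)`. -/
def IsLisoSolution {V W : Type*} [Fintype V] [Fintype W] [DecidableEq V] [DecidableEq W]
    (K : ℕ) (G : SimpleGraph V) (H : SimpleGraph W) (X : Finset (V × W) → ℝ) : Prop :=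
  (∀ π : Finset (V × W), π.card + 1 ≤ K → ∀ w : W,
      ∑ v : V, X (insert (v, w) π) = X π) ∧
  (∀ π : Finset (V × W), π.card + 1 ≤ K → ∀ v : V,
      ∑ w : W, X (insert (v, w) π) = X π) ∧
  (∀ π : Finset (V × W), π.card ≤ K → ¬ IsPartialIso G H π → X π = 0) ∧
  X ∅ = 1

/-- `bag : Fin r → Finset α` is a path decomposition of `F`. -/
def IsPathDecomp {α : Type*} (F : SimpleGraph α) {r : ℕ} (bag : Fin r → Finset α) : Prop :=
  (∀ v : α, ∃ i, v ∈ bag i) ∧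
  (∀ u v : α, F.Adj u v → ∃ i, u ∈ bag i ∧ v ∈ bag i) ∧
  (∀ (v : α) (i j l : Fin r), i ≤ j → j ≤ l → v ∈ bag i → v ∈ bag l → v ∈ bag j)

/-- The number of bag-wise isomorphic homomorphisms from `(F, bag)` to `G` that in
addition map the distinguished vertices `u 1, …, u k` to `v 1, …, v k`. -/
noncomputable def bisoCondCount {α V : Type*} (F : SimpleGraph α) {r : ℕ}
    (bag : Fin r → Finset α) (G : SimpleGraph V) {k : ℕ}
    (u : Fin k → α) (v : Fin k → V) : ℕ :=
  Nat.card {f : α → V //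
    (∀ a b, F.Adj a b → G.Adj (f a) (f b)) ∧
    (∀ i : Fin r, Set.InjOn f (bag i) ∧
      ∀ a ∈ bag i, ∀ b ∈ bag i, (F.Adj a b ↔ G.Adj (f a) (f b))) ∧
    (∀ i : Fin k, f (u i) = v i)}

/-!
Read the decomposition from its last bag backwards. For a bag `i` and a map `φ`, count the maps
that agree with `φ` except at the vertices introduced after bag `i` and are isomorphisms on bag
`i` and on every later bag; this depends only on `φ` on bag `i`. Downward induction on `i` shows
that the count in `G` equals `∑ ψ, X (φ × ψ on bag i) * (the count in H)`. A nonzero `X π`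
forces `π` to be a partial isomorphism, so a bag is mapped isomorphically into `G` exactly when
its partner is mapped isomorphically into `H`. At the last bag both counts are such indicators,
and the remaining sum of `X` is `X ∅ = 1` by (L2). A step that introduces a vertex `a` splits
the count in `G` along the image of `a`, and (L1) sums this coordinate away; a step that forgets
`a` multiplies it by an indicator, and (L2) sums the extra coordinate of `ψ` away. At the first
bag `{u 1, …, u k}` the counts are the `bisoCondCount`s.
-/

open Finset

section IsoOn

variable {α V W : Type*} {F : SimpleGraph α} {G : SimpleGraph V} {H : SimpleGraph W}

def IsoOn (F : SimpleGraph α) (G : SimpleGraph V) (g : α → V) (B : Finset α) : Prop :=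
  Set.InjOn g B ∧ ∀ a ∈ B, ∀ b ∈ B, (F.Adj a b ↔ G.Adj (g a) (g b))

theorem IsoOn.mono {g : α → V} {B B' : Finset α} (h : IsoOn F G g B') (hB : B ⊆ B') :
    IsoOn F G g B :=
  ⟨h.1.mono (coe_subset.2 hB), fun a ha b hb => h.2 a (hB ha) b (hB hb)⟩

theorem isoOn_congr {g g' : α → V} {B : Finset α} (h : ∀ a ∈ B, g a = g' a) :
    IsoOn F G g B ↔ IsoOn F G g' B := by
  have transfer : ∀ {g g' : α → V}, (∀ a ∈ B, g a = g' a) → IsoOn F G g B → IsoOn F G g' B :=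
    fun h ⟨hinj, hadj⟩ => ⟨fun a ha b hb hab => hinj ha hb (by rwa [h a ha, h b hb]),
      fun a ha b hb => by rw [← h a ha, ← h b hb]; exact hadj a ha b hb⟩
  exact ⟨transfer h, transfer fun a ha => (h a ha).symm⟩

variable [DecidableEq V] [DecidableEq W]

def pairsOn (B : Finset α) (φ : α → V) (ψ : α → W) : Finset (V × W) :=
  B.image fun a => (φ a, ψ a)

theorem card_pairsOn_le (B : Finset α) (φ : α → V) (ψ : α → W) :
    (pairsOn B φ ψ).card ≤ B.card :=
  card_image_le

theorem pairsOn_insert [DecidableEq α] (a : α) (B : Finset α) (φ : α → V) (ψ : α → W) :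
    pairsOn (insert a B) φ ψ = insert (φ a, ψ a) (pairsOn B φ ψ) :=
  image_insert _ _ _

theorem pairsOn_congr {B : Finset α} {φ φ' : α → V} {ψ ψ' : α → W}
    (hφ : ∀ a ∈ B, φ a = φ' a) (hψ : ∀ a ∈ B, ψ a = ψ' a) :
    pairsOn B φ ψ = pairsOn B φ' ψ' :=
  image_congr fun a ha => by simp [hφ a ha, hψ a ha]

theorem IsPartialIso.isoOn_iff {B : Finset α} {φ : α → V} {ψ : α → W}
    (h : IsPartialIso G H (pairsOn B φ ψ)) : IsoOn F G φ B ↔ IsoOn F H ψ B := by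
  have hmem : ∀ a ∈ B, (φ a, ψ a) ∈ pairsOn B φ ψ := fun a ha => mem_image_of_mem _ ha
  have key : ∀ a ∈ B, ∀ b ∈ B,
      (φ a = φ b ↔ ψ a = ψ b) ∧ (G.Adj (φ a) (φ b) ↔ H.Adj (ψ a) (ψ b)) :=
    fun a ha b hb => h _ (hmem a ha) _ (hmem b hb)
  exact ⟨fun ⟨hinj, hadj⟩ => ⟨fun a ha b hb hab => hinj ha hb ((key a ha b hb).1.2 hab),
      fun a ha b hb => (hadj a ha b hb).trans (key a ha b hb).2⟩,
    fun ⟨hinj, hadj⟩ => ⟨fun a ha b hb hab => hinj ha hb ((key a ha b hb).1.1 hab),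
      fun a ha b hb => (hadj a ha b hb).trans (key a ha b hb).2.symm⟩⟩

end IsoOn

section FunsOn

variable {α V : Type*} [Fintype α] [DecidableEq α] [Fintype V] [DecidableEq V]

/-- Maps `B → V`, encoded as the maps `α → V` that take the value `d` off `B`. -/
def funsOn (d : V) (B : Finset α) : Finset (α → V) := {ψ | ∀ a ∉ B, ψ a = d}

theorem mem_funsOn {d : V} {B : Finset α} {ψ : α → V} :
    ψ ∈ funsOn d B ↔ ∀ a ∉ B, ψ a = d := by
  simp [funsOn]

theorem funsOn_empty (d : V) : funsOn d (∅ : Finset α) = {fun _ => d} := by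
  ext ψ
  simp [mem_funsOn, funext_iff]

theorem sum_funsOn_insert {M : Type*} [AddCommMonoid M] (d : V) {a : α} {B : Finset α}
    (ha : a ∉ B) (f : (α → V) → M) :
    ∑ ψ ∈ funsOn d (insert a B), f ψ = ∑ v, ∑ ψ ∈ funsOn d B, f (Function.update ψ a v) := by
  rw [← sum_product']
  refine sum_nbij' (fun ψ => (ψ a, Function.update ψ a d)) (fun x => Function.update x.2 a x.1)
    ?_ ?_ ?_ ?_ ?_
  · intro ψ hψ
    simp only [mem_product, mem_univ, true_and, mem_funsOn] at hψ ⊢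
    intro b hb
    rcases eq_or_ne b a with rfl | hba
    · simp
    · simp [hba, hψ b (by simp [hba, hb])]
  · intro x hx
    simp only [mem_product, mem_univ, true_and, mem_funsOn] at hx ⊢
    intro b hb
    rw [mem_insert, not_or] at hb
    simp [hb.1, hx b hb.2]
  · intro ψ _
    simp
  · intro x hx
    simp only [mem_product, mem_univ, true_and, mem_funsOn] at hx
    ext <;> simp [← hx a ha]
  · intro ψ _
    simp

theorem sum_funsOn_image {ι M : Type*} [AddCommMonoid M] [Fintype ι] [DecidableEq ι] (d : V)
    {u : ι → α} (hu : u.Injective) (f : (α → V) → M) :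
    ∑ ψ ∈ funsOn d (univ.image u), f ψ = ∑ w : ι → V, f (Function.extend u w fun _ => d) := by
  have extend_comp_self : ∀ ψ ∈ funsOn d (univ.image u),
      Function.extend u (ψ ∘ u) (fun _ => d) = ψ := by
    intro ψ hψ
    simp only [mem_funsOn, mem_image, mem_univ, true_and] at hψ
    ext b
    by_cases hb : ∃ i, u i = b
    · obtain ⟨i, rfl⟩ := hb
      exact hu.extend_apply _ _ _
    · rw [Function.extend_apply' _ _ _ hb, hψ b hb]
  refine sum_nbij' (fun ψ => ψ ∘ u) (fun w => Function.extend u w fun _ => d)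
    (fun _ _ => mem_univ _) ?_ extend_comp_self (fun w _ => Function.extend_comp hu _ _) ?_
  · intro w _
    simp only [mem_funsOn, mem_image, mem_univ, true_and]
    exact fun b hb => Function.extend_apply' _ _ _ hb
  · intro ψ hψ
    rw [extend_comp_self ψ hψ]

end FunsOn

section LinearSystem

variable {α V W : Type*} [Fintype V] [Fintype W] [DecidableEq V] [DecidableEq W]
  {K : ℕ} {G : SimpleGraph V} {H : SimpleGraph W} {X : Finset (V × W) → ℝ}

theorem IsLisoSolution.sum_update_left [DecidableEq α] (hX : IsLisoSolution K G H X) {a : α}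
    {B : Finset α} (ha : a ∉ B) (hB : B.card + 1 ≤ K) (φ : α → V) (ψ : α → W) :
    ∑ v, X (pairsOn (insert a B) (Function.update φ a v) ψ) = X (pairsOn B φ ψ) := by
  have hpairs : ∀ v, pairsOn (insert a B) (Function.update φ a v) ψ =
      insert (v, ψ a) (pairsOn B φ ψ) := fun v => by
    rw [pairsOn_insert, Function.update_self, pairsOn_congr
      (fun b hb => Function.update_of_ne (ne_of_mem_of_not_mem hb ha) _ _) fun _ _ => rfl]
  simp only [hpairs]
  exact hX.1 _ (by have := card_pairsOn_le B φ ψ; omega) (ψ a)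

theorem IsLisoSolution.sum_update_right [DecidableEq α] (hX : IsLisoSolution K G H X) {a : α}
    {B : Finset α} (ha : a ∉ B) (hB : B.card + 1 ≤ K) (φ : α → V) (ψ : α → W) :
    ∑ w, X (pairsOn (insert a B) φ (Function.update ψ a w)) = X (pairsOn B φ ψ) := by
  have hpairs : ∀ w, pairsOn (insert a B) φ (Function.update ψ a w) =
      insert (φ a, w) (pairsOn B φ ψ) := fun w => by
    rw [pairsOn_insert, Function.update_self, pairsOn_congr (fun _ _ => rfl)
      fun b hb => Function.update_of_ne (ne_of_mem_of_not_mem hb ha) _ _]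
  simp only [hpairs]
  exact hX.2.1 _ (by have := card_pairsOn_le B φ ψ; omega) (φ a)

theorem IsLisoSolution.sum_funsOn_pairsOn [Fintype α] [DecidableEq α]
    (hX : IsLisoSolution K G H X) (d : W) {B : Finset α} (hB : B.card ≤ K) (φ : α → V) :
    ∑ ψ ∈ funsOn d B, X (pairsOn B φ ψ) = 1 := by
  induction B using Finset.induction_on with
  | empty => simp [funsOn_empty, pairsOn, hX.2.2.2]
  | insert a B ha ih =>
    rw [card_insert_of_notMem ha] at hB
    rw [sum_funsOn_insert d ha, sum_comm]
    simp only [hX.sum_update_right ha hB]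
    exact ih (by omega)

open Classical in
theorem IsLisoSolution.mul_ite_isoOn (hX : IsLisoSolution K G H X) (F : SimpleGraph α)
    {B : Finset α} (hB : B.card ≤ K) (φ : α → V) (ψ : α → W) (c : ℝ) :
    X (pairsOn B φ ψ) * (if IsoOn F H ψ B then c else 0) =
      if IsoOn F G φ B then X (pairsOn B φ ψ) * c else 0 := by
  by_cases hπ : IsPartialIso G H (pairsOn B φ ψ)
  · simp only [hπ.isoOn_iff, mul_ite, mul_zero]
  · simp [hX.2.2.1 _ ((card_pairsOn_le _ _ _).trans hB) hπ]

theorem IsLisoSolution.nonempty_right (hX : IsLisoSolution K G H X) (hK : 1 ≤ K) [Nonempty V] :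
    Nonempty W := by
  by_contra hW
  rw [not_nonempty_iff] at hW
  simpa [hX.2.2.2] using hX.2.1 ∅ (by simpa using hK) (Classical.arbitrary V)

end LinearSystem

section ExtensionCount

variable {α V : Type*} {r : ℕ} {bag : Fin r → Finset α} {i i' : Fin r}

def IntroducedAfter (bag : Fin r → Finset α) (i : Fin r) (a : α) : Prop :=
  a ∉ bag i ∧ ∃ j, i < j ∧ a ∈ bag j

theorem mem_of_not_introducedAfter {a : α} {j : Fin r} (ha : ¬ IntroducedAfter bag i a)
    (hij : i ≤ j) (haj : a ∈ bag j) : a ∈ bag i := by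
  rcases hij.eq_or_lt with rfl | hij
  · exact haj
  · by_contra hai
    exact ha ⟨hai, j, hij, haj⟩

variable [Fintype α] [DecidableEq α] [Fintype V] {F : SimpleGraph α} {G : SimpleGraph V}

open Classical in
noncomputable def extensionCount (F : SimpleGraph α) (G : SimpleGraph V)
    (bag : Fin r → Finset α) (i : Fin r) (φ : α → V) : ℕ :=
  #{g | (∀ a, ¬ IntroducedAfter bag i a → g a = φ a) ∧ ∀ j, i ≤ j → IsoOn F G g (bag j)}

theorem extensionCount_congr {φ φ' : α → V} (h : ∀ a ∈ bag i, φ a = φ' a) :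
    extensionCount F G bag i φ = extensionCount F G bag i φ' := by
  classical
  suffices key : ∀ φ φ' : α → V, (∀ a ∈ bag i, φ a = φ' a) →
      extensionCount F G bag i φ ≤ extensionCount F G bag i φ' from
    (key φ φ' h).antisymm (key φ' φ fun a ha => (h a ha).symm)
  intro φ φ' h
  let reset : (α → V) → α → V := fun g a => if IntroducedAfter bag i a then g a else φ' a
  refine card_le_card_of_injOn reset ?_ ?_
  · intro g hg
    simp only [mem_coe, mem_filter, mem_univ, true_and] at hg ⊢
    refine ⟨fun a ha => if_neg ha, fun j hij => (isoOn_congr fun a ha => ?_).1 (hg.2 j hij)⟩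
    by_cases hint : IntroducedAfter bag i a
    · simp [reset, hint]
    · simp only [reset, if_neg hint, hg.1 a hint]
      exact h a (mem_of_not_introducedAfter hint hij ha)
  · intro g₁ hg₁ g₂ hg₂ heq
    simp only [mem_coe, mem_filter, mem_univ, true_and] at hg₁ hg₂
    ext a
    by_cases hint : IntroducedAfter bag i a
    · simpa [reset, hint] using congrFun heq a
    · rw [hg₁.1 a hint, hg₂.1 a hint]

open Classical in
theorem extensionCount_of_isMax (hi : IsMax i) (φ : α → V) :
    extensionCount F G bag i φ = if IsoOn F G φ (bag i) then 1 else 0 := by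
  have hφ : ∀ g : α → V, (∀ a, ¬ IntroducedAfter bag i a → g a = φ a) ↔ g = φ := by
    refine fun g => ⟨fun h => funext fun a => h a fun ⟨_, j, hij, _⟩ => hi.not_lt hij, ?_⟩
    rintro rfl
    exact fun _ _ => rfl
  have hj : ∀ j, i ≤ j ↔ j = i := fun j => ⟨fun hij => (hi hij).antisymm hij, fun h => h ▸ le_rfl⟩
  unfold extensionCount
  simp only [hφ, hj, forall_eq]
  split_ifs with hiso
  · exact card_eq_one.2 ⟨φ, by ext g; simp +contextual [hiso]⟩
  · simp +contextual [hiso]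

theorem extensionCount_introduce [DecidableEq V] (hi : i ⋖ i') {a : α} (ha : a ∉ bag i)
    (hbag : bag i' = insert a (bag i)) (φ : α → V) :
    extensionCount F G bag i φ = ∑ v, extensionCount F G bag i' (Function.update φ a v) := by
  classical
  have hlt : ∀ j, i < j ↔ i' ≤ j := fun j => Set.ext_iff.1 hi.Ioi_eq j
  have hintro : ∀ b, IntroducedAfter bag i b ↔ b = a ∨ IntroducedAfter bag i' b := by
    refine fun b => ⟨fun ⟨hb, j, hij, hbj⟩ => or_iff_not_imp_left.2 fun hba => ?_, ?_⟩
    · have hb' : b ∉ bag i' := by simp [hbag, hba, hb]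
      exact ⟨hb', j, ((hlt j).1 hij).lt_of_ne (by rintro rfl; exact hb' hbj), hbj⟩
    · rintro (rfl | ⟨hb, j, hij, hbj⟩)
      · exact ⟨ha, i', hi.lt, hbag ▸ mem_insert_self _ _⟩
      · exact ⟨fun h => hb (hbag ▸ mem_insert_of_mem h), j, hi.lt.trans hij, hbj⟩
  have hagree : ∀ (g : α → V) (v : V), ((∀ b, ¬ IntroducedAfter bag i b → g b = φ b) ∧ g a = v) ↔
      ∀ b, ¬ IntroducedAfter bag i' b → g b = Function.update φ a v b := by
    refine fun g v => ⟨fun ⟨h, hv⟩ b hb => ?_, fun h => ⟨fun b hb => ?_, ?_⟩⟩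
    · rcases eq_or_ne b a with rfl | hba
      · simp [hv]
      · rw [Function.update_of_ne hba]
        exact h b (by rw [hintro]; tauto)
    · have hba : b ≠ a := fun e => hb ((hintro b).2 (Or.inl e))
      simpa [hba] using h b fun h' => hb ((hintro b).2 (Or.inr h'))
    · simpa using h a fun h' => h'.1 (hbag ▸ mem_insert_self _ _)
  have hiso : ∀ g : α → V, (∀ j, i ≤ j → IsoOn F G g (bag j)) ↔
      ∀ j, i' ≤ j → IsoOn F G g (bag j) := by
    refine fun g => ⟨fun h j hj => h j (hi.le.trans hj), fun h j hij => ?_⟩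
    rcases hij.eq_or_lt with rfl | hij
    · exact (h i' le_rfl).mono (hbag ▸ subset_insert _ _)
    · exact h j ((hlt j).1 hij)
  unfold extensionCount
  rw [card_eq_sum_card_fiberwise (f := fun g => g a) (t := univ) fun _ _ => mem_coe.2 (mem_univ _)]
  refine sum_congr rfl fun v _ => congrArg card ?_
  ext g
  simp only [mem_filter, mem_univ, true_and, ← hagree, hiso]
  tauto

open Classical in
theorem extensionCount_forget (hi : i ⋖ i') {a : α} (hbag : bag i = insert a (bag i'))
    (hlater : ∀ j, i' < j → a ∉ bag j) (φ : α → V) :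
    extensionCount F G bag i φ =
      if IsoOn F G φ (bag i) then extensionCount F G bag i' φ else 0 := by
  have hlt : ∀ j, i < j ↔ i' ≤ j := fun j => Set.ext_iff.1 hi.Ioi_eq j
  have hintro : ∀ b, IntroducedAfter bag i b ↔ IntroducedAfter bag i' b := by
    refine fun b => ⟨fun ⟨hb, j, hij, hbj⟩ => ?_, fun ⟨hb, j, hij, hbj⟩ => ?_⟩
    · have hb' : b ∉ bag i' := fun h => hb (hbag ▸ mem_insert_of_mem h)
      exact ⟨hb', j, ((hlt j).1 hij).lt_of_ne (by rintro rfl; exact hb' hbj), hbj⟩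
    · have hba : b ≠ a := by rintro rfl; exact hlater j hij hbj
      exact ⟨by simp [hbag, hba, hb], j, hi.lt.trans hij, hbj⟩
  have hiso : ∀ g : α → V, (∀ b, ¬ IntroducedAfter bag i' b → g b = φ b) →
      (IsoOn F G g (bag i) ↔ IsoOn F G φ (bag i)) :=
    fun g hg => isoOn_congr fun b hb => hg b ((hintro b).not.1 fun h => h.1 hb)
  have hsplit : ∀ g : α → V, (∀ j, i ≤ j → IsoOn F G g (bag j)) ↔
      IsoOn F G g (bag i) ∧ ∀ j, i' ≤ j → IsoOn F G g (bag j) := by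
    refine fun g => ⟨fun h => ⟨h i le_rfl, fun j hj => h j (hi.le.trans hj)⟩,
      fun ⟨h0, h⟩ j hij => ?_⟩
    rcases hij.eq_or_lt with rfl | hij
    · exact h0
    · exact h j ((hlt j).1 hij)
  unfold extensionCount
  simp only [hintro, hsplit]
  split_ifs with hφ
  · exact congrArg card (filter_congr fun g _ =>
      ⟨fun ⟨h1, _, h2⟩ => ⟨h1, h2⟩, fun ⟨h1, h2⟩ => ⟨h1, (hiso g h1).2 hφ, h2⟩⟩)
  · exact card_eq_zero.2 (filter_eq_empty_iff.2 fun g _ ⟨h1, h2, _⟩ => hφ ((hiso g h1).1 h2))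

end ExtensionCount

section Transfer

variable {α V W : Type*} [Fintype α] [DecidableEq α] [Fintype V] [Fintype W] [DecidableEq V]
  [DecidableEq W] {K r : ℕ} {F : SimpleGraph α} {G : SimpleGraph V} {H : SimpleGraph W}
  {X : Finset (V × W) → ℝ} {bag : Fin r → Finset α} {i i' : Fin r} {dW : W}

def CountTransferAt (X : Finset (V × W) → ℝ) (F : SimpleGraph α) (G : SimpleGraph V)
    (H : SimpleGraph W) (bag : Fin r → Finset α) (dW : W) (i : Fin r) : Prop :=
  ∀ φ : α → V, (extensionCount F G bag i φ : ℝ) =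
    ∑ ψ ∈ funsOn dW (bag i), X (pairsOn (bag i) φ ψ) * extensionCount F H bag i ψ

theorem countTransferAt_of_isMax (hX : IsLisoSolution K G H X) (hB : (bag i).card ≤ K)
    (hi : IsMax i) : CountTransferAt X F G H bag dW i := by
  classical
  intro φ
  simp only [extensionCount_of_isMax hi, Nat.cast_ite, Nat.cast_one, Nat.cast_zero,
    hX.mul_ite_isoOn F hB, sum_ite_irrel, sum_const_zero, mul_one, hX.sum_funsOn_pairsOn dW hB]

theorem CountTransferAt.of_introduce (hX : IsLisoSolution K G H X) (hB : (bag i').card ≤ K)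
    (hi : i ⋖ i') {a : α} (ha : a ∉ bag i) (hbag : bag i' = insert a (bag i))
    (h : CountTransferAt X F G H bag dW i') : CountTransferAt X F G H bag dW i := by
  intro φ
  have hBi : (bag i).card + 1 ≤ K := by rwa [hbag, card_insert_of_notMem ha] at hB
  calc (extensionCount F G bag i φ : ℝ)
      = ∑ v, (extensionCount F G bag i' (Function.update φ a v) : ℝ) := by
        rw [extensionCount_introduce hi ha hbag, Nat.cast_sum]
    _ = ∑ v, ∑ ψ ∈ funsOn dW (bag i'),
          X (pairsOn (bag i') (Function.update φ a v) ψ) * extensionCount F H bag i' ψ := by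
        exact sum_congr rfl fun v _ => h _
    _ = ∑ ψ ∈ funsOn dW (bag i'), X (pairsOn (bag i) φ ψ) * extensionCount F H bag i' ψ := by
        rw [sum_comm]
        simp only [← sum_mul, hbag, hX.sum_update_left ha hBi]
    _ = ∑ ψ ∈ funsOn dW (bag i), ∑ w, X (pairsOn (bag i) φ (Function.update ψ a w)) *
          extensionCount F H bag i' (Function.update ψ a w) := by
        rw [hbag, sum_funsOn_insert dW ha, sum_comm]
    _ = ∑ ψ ∈ funsOn dW (bag i), X (pairsOn (bag i) φ ψ) * extensionCount F H bag i ψ := by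
        refine sum_congr rfl fun ψ _ => ?_
        rw [extensionCount_introduce hi ha hbag, Nat.cast_sum, mul_sum]
        refine sum_congr rfl fun w _ => ?_
        rw [pairsOn_congr (fun _ _ => rfl)
          fun b hb => Function.update_of_ne (ne_of_mem_of_not_mem hb ha) _ _]

theorem CountTransferAt.of_forget (hX : IsLisoSolution K G H X) (hB : (bag i).card ≤ K)
    (hi : i ⋖ i') {a : α} (ha : a ∉ bag i') (hbag : bag i = insert a (bag i'))
    (hlater : ∀ j, i' < j → a ∉ bag j) (h : CountTransferAt X F G H bag dW i') :
    CountTransferAt X F G H bag dW i := by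
  classical
  intro φ
  have hBi' : (bag i').card + 1 ≤ K := by rwa [hbag, card_insert_of_notMem ha] at hB
  have hsum : ∑ ψ ∈ funsOn dW (bag i), X (pairsOn (bag i) φ ψ) * extensionCount F H bag i' ψ =
      extensionCount F G bag i' φ := by
    have hcongr : ∀ ψ w, extensionCount F H bag i' (Function.update ψ a w) =
        extensionCount F H bag i' ψ := fun ψ w =>
      extensionCount_congr fun b hb => Function.update_of_ne (ne_of_mem_of_not_mem hb ha) _ _
    rw [h φ, hbag, sum_funsOn_insert dW ha, sum_comm]
    simp only [hcongr, ← sum_mul, hX.sum_update_right ha hBi']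
  simp only [extensionCount_forget hi hbag hlater, Nat.cast_ite, Nat.cast_zero,
    hX.mul_ite_isoOn F hB, sum_ite_irrel, sum_const_zero, hsum]

theorem countTransferAt_of_covBy (hX : IsLisoSolution K G H X)
    (hint : ∀ (a : α) (i j l : Fin r), i ≤ j → j ≤ l → a ∈ bag i → a ∈ bag l → a ∈ bag j)
    (hcard : ∀ i, (bag i).card ≤ K)
    (hstep : ∀ i i' : Fin r, i ⋖ i' → bag i ⋖ bag i' ∨ bag i' ⋖ bag i) (dW : W) (i : Fin r) :
    CountTransferAt X F G H bag dW i := by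
  induction i using WellFoundedGT.induction with
  | _ i ih =>
  by_cases hmax : IsMax i
  · exact countTransferAt_of_isMax hX (hcard i) hmax
  have hi := Order.covBy_succ_of_not_isMax hmax
  rcases hstep _ _ hi with hcov | hcov <;> obtain ⟨a, ha, hbag⟩ := hcov.exists_finset_insert
  · exact (ih _ hi.lt).of_introduce hX (hcard _) hi ha hbag.symm
  · have hai : a ∈ bag i := hbag ▸ mem_insert_self a _
    exact (ih _ hi.lt).of_forget hX (hcard i) hi ha hbag.symm
      fun j hj haj => ha (hint a i _ j hi.le hj.le hai haj)

end Transfer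

section FirstBag

variable {α V W : Type*} [Fintype α] [DecidableEq α] [Fintype V] [DecidableEq V] {r k : ℕ}
  {F : SimpleGraph α} {bag : Fin r → Finset α} {u : Fin k → α}

theorem extensionCount_zero_eq_bisoCondCount (G : SimpleGraph V) (hr : 0 < r)
    (hdec : IsPathDecomp F bag) (hu : u.Injective) (hbag0 : bag ⟨0, hr⟩ = univ.image u)
    (v : Fin k → V) (φ₀ : α → V) :
    extensionCount F G bag ⟨0, hr⟩ (Function.extend u v φ₀) = bisoCondCount F bag G u v := by
  classical
  have hroot : ∀ a, ¬ IntroducedAfter bag ⟨0, hr⟩ a ↔ ∃ i, u i = a := by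
    intro a
    rw [show (∃ i, u i = a) ↔ a ∈ bag ⟨0, hr⟩ by simp [hbag0]]
    obtain ⟨j, hj⟩ := hdec.1 a
    exact ⟨fun h => mem_of_not_introducedAfter h (Nat.zero_le j) hj, fun h hi => hi.1 h⟩
  have hagree : ∀ g : α → V,
      (∀ a, ¬ IntroducedAfter bag ⟨0, hr⟩ a → g a = Function.extend u v φ₀ a) ↔
        ∀ i, g (u i) = v i := by
    simp [hroot, hu.extend_apply]
  rw [bisoCondCount, Nat.card_eq_fintype_card, Fintype.card_subtype]
  unfold extensionCount
  congr 1
  ext g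
  simp only [mem_filter, mem_univ, true_and, hagree]
  have hiso : (∀ j, ⟨0, hr⟩ ≤ j → IsoOn F G g (bag j)) ↔ ∀ j, IsoOn F G g (bag j) :=
    forall_congr' fun j => imp_iff_right (Nat.zero_le j)
  have hhom : (∀ j, IsoOn F G g (bag j)) → ∀ a b, F.Adj a b → G.Adj (g a) (g b) := by
    intro h a b hab
    obtain ⟨j, ha, hb⟩ := hdec.2.1 a b hab
    exact ((h j).2 a ha b hb).1 hab
  rw [hiso]
  exact ⟨fun ⟨h1, h2⟩ => ⟨hhom h2, h2, h1⟩, fun ⟨_, h2, h3⟩ => ⟨h3, h2⟩⟩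

theorem bisoCondCount_eq_sum_of_countTransferAt [Fintype W] [DecidableEq W] {G : SimpleGraph V}
    {H : SimpleGraph W} {X : Finset (V × W) → ℝ} (hr : 0 < r) (hdec : IsPathDecomp F bag)
    (hu : u.Injective) (hbag0 : bag ⟨0, hr⟩ = univ.image u) (dV : V) {dW : W}
    (htr : CountTransferAt X F G H bag dW ⟨0, hr⟩) (v : Fin k → V) :
    (bisoCondCount F bag G u v : ℝ) =
      ∑ w : Fin k → W, X (univ.image fun i => (v i, w i)) * bisoCondCount F bag H u w := by
  rw [← extensionCount_zero_eq_bisoCondCount G hr hdec hu hbag0 v fun _ => dV, htr, hbag0,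
    sum_funsOn_image dW hu]
  refine sum_congr rfl fun w _ => ?_
  rw [extensionCount_zero_eq_bisoCondCount H hr hdec hu hbag0]
  simp [pairsOn, image_image, Function.comp_def, hu.extend_apply]

end FirstBag

theorem stmt19 (k : ℕ) (hk : 1 ≤ k) {V W : Type*} [Fintype V] [Fintype W]
    [DecidableEq V] [DecidableEq W]
    (G : SimpleGraph V) (H : SimpleGraph W)
    (X : Finset (V × W) → ℝ) (hX : IsLisoSolution (k + 1) G H X)
    (p : ℕ) (F : SimpleGraph (Fin p)) (ℓ : ℕ) (hℓ : 1 ≤ ℓ)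
    (bag : Fin (2 * ℓ - 1) → Finset (Fin p))
    (hdec : IsPathDecomp F bag)
    (hsize : ∀ i : Fin (2 * ℓ - 1),
      (bag i).card = if (i : ℕ) % 2 = 0 then k else k + 1)
    (hincl : ∀ (i : ℕ) (hi : i + 1 < 2 * ℓ - 1),
      (i % 2 = 0 → bag ⟨i, by omega⟩ ⊆ bag ⟨i + 1, hi⟩) ∧
      (i % 2 = 1 → bag ⟨i + 1, hi⟩ ⊆ bag ⟨i, by omega⟩))
    (u : Fin k → Fin p) (hu : Function.Injective u)
    (hbag0 : bag ⟨0, by omega⟩ = Finset.univ.image u) :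
    ∀ v : Fin k → V,
      (bisoCondCount F bag G u v : ℝ) =
        ∑ w : Fin k → W,
          X (Finset.univ.image fun i => (v i, w i)) * (bisoCondCount F bag H u w : ℝ) := by
  intro v
  have : Nonempty V := ⟨v ⟨0, hk⟩⟩
  obtain ⟨dW⟩ := hX.nonempty_right (Nat.le_add_left 1 k)
  have hcard : ∀ i, (bag i).card ≤ k + 1 := fun i => by
    have := hsize i
    split_ifs at this <;> omega
  have hstep : ∀ i i' : Fin (2 * ℓ - 1), i ⋖ i' → bag i ⋖ bag i' ∨ bag i' ⋖ bag i := by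
    rintro ⟨i, hi⟩ ⟨i', hi'⟩ hcov
    obtain rfl : i + 1 = i' := Nat.covBy_iff_add_one_eq.1 (Fin.covBy_iff.1 hcov)
    have hsi := hsize ⟨i, hi⟩
    have hsi' := hsize ⟨i + 1, hi'⟩
    simp only [covBy_iff_exists_insert, exists_eq_insert_iff]
    rcases Nat.mod_two_eq_zero_or_one i with h | h
    · exact Or.inl ⟨(hincl i hi').1 h, by simp only at hsi hsi'; split_ifs at hsi hsi' <;> omega⟩
    · exact Or.inr ⟨(hincl i hi').2 h, by simp only at hsi hsi'; split_ifs at hsi hsi' <;> omega⟩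
  exact bisoCondCount_eq_sum_of_countTransferAt (by omega) hdec hu hbag0 (v ⟨0, hk⟩)
    (countTransferAt_of_covBy hX hdec.2.2 hcard hstep dW _) v
end
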